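/- arXiv:1006.2955 — 2 statements merged into one kernel-verified Lean document; each statement's English description precedes it below -/
import Mathlib

section
/- If G has a vertex cover of size τ, then the edges of the augmented grid embedding (where each edge of G is replaced by a path of 5 edges) can be covered by τ + 2|E| sensors, by placing sensors at the cover vertices and at alternate internal vertices of each 5-path. -/
/-- Vertices of the 5-subdivision of a graph on `V`: original vertices, plus 4 internal
vertices for each (oriented `a < b`) edge. -/
abbrev SubVert (V : Type*) := V ⊕ (V × V × Fin 4)

/-- One-directional adjacency of the 5-subdivision: for each edge `a —G— b` with `a < b`,
the path `a – (a,b,0) – (a,b,1) – (a,b,2) – (a,b,3) – b`. -/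
def subdivRel {V : Type*} [LinearOrder V] (G : SimpleGraph V) :
    SubVert V → SubVert V → Prop
  | Sum.inl u, Sum.inr (a, b, i) =>
      G.Adj a b ∧ a < b ∧ ((u = a ∧ i = 0) ∨ (u = b ∧ i = 3))
  | Sum.inr (a, b, i), Sum.inr (a', b', j) =>
      a = a' ∧ b = b' ∧ G.Adj a b ∧ a < b ∧ (i : ℕ) + 1 = (j : ℕ)
  | _, _ => False

/-- The 5-subdivision of `G`: every edge is replaced by a path of 5 edges. -/
def subdiv {V : Type*} [LinearOrder V] (G : SimpleGraph V) : SimpleGraph (SubVert V) where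
  Adj x y := subdivRel G x y ∨ subdivRel G y x
  symm := ⟨fun _ _ h => h.symm⟩
  loopless := ⟨by
    rintro (u | ⟨a, b, i⟩) h
    · rcases h with h | h <;> exact h.elim
    · rcases h with ⟨-, -, -, -, h⟩ | ⟨-, -, -, -, h⟩ <;> omega⟩

/-- `S` is a vertex cover of `H`. -/
def IsCover {W : Type*} (H : SimpleGraph W) (S : Set W) : Prop :=
  ∀ ⦃u v : W⦄, H.Adj u v → u ∈ S ∨ v ∈ S

/-!
Put sensors on the cover vertices, and on each subdivided edge `a – v₀ – v₁ – v₂ – v₃ – b`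
(`a < b`) on `v₁, v₃` if `a` is in the cover, and on `v₀, v₂` otherwise. In the first case `a`
covers `a – v₀`; in the second `b` is in the cover and covers `v₃ – b`. Either way the two
internal sensors cover the remaining four edges of the path.
-/

open Finset

section

variable {V : Type*} [LinearOrder V] (G : SimpleGraph V) (C : Finset V)

def pathSensors (a b : V) : Finset (SubVert V) :=
  if a ∈ C then {Sum.inr (a, b, 1), Sum.inr (a, b, 3)} else {Sum.inr (a, b, 0), Sum.inr (a, b, 2)}

theorem card_pathSensors_le (a b : V) : #(pathSensors C a b) ≤ 2 := by
  unfold pathSensors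
  split_ifs <;> exact card_le_two

theorem inr_mem_pathSensors_or {a b : V} {i j : Fin 4} (hij : (i : ℕ) + 1 = j) :
    Sum.inr (a, b, i) ∈ pathSensors C a b ∨ Sum.inr (a, b, j) ∈ pathSensors C a b := by
  unfold pathSensors
  split_ifs <;> fin_cases i <;> fin_cases j <;> simp_all

variable [Fintype V] [DecidableRel G.Adj]

def orientedEdges : Finset (V × V) :=
  univ.filter fun p => G.Adj p.1 p.2 ∧ p.1 < p.2

theorem card_orientedEdges_le : #(orientedEdges G) ≤ #G.edgeFinset := by
  refine card_le_card_of_injOn (fun p => s(p.1, p.2)) (fun p hp => ?_) ?_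
  · simp only [orientedEdges, coe_filter, Set.mem_ofPred_eq, mem_univ, true_and] at hp
    simpa using hp.1
  · rintro ⟨a, b⟩ hab ⟨c, d⟩ hcd h
    simp only [orientedEdges, coe_filter, Set.mem_ofPred_eq, mem_univ, true_and] at hab hcd
    rcases Sym2.eq_iff.1 h with ⟨rfl, rfl⟩ | ⟨rfl, rfl⟩
    · rfl
    · exact absurd hab.2 (not_lt.2 hcd.2.le)

def sensors : Finset (SubVert V) :=
  C.image Sum.inl ∪ (orientedEdges G).biUnion fun p => pathSensors C p.1 p.2

theorem card_sensors_le : #(sensors G C) ≤ #C + 2 * #G.edgeFinset :=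
  calc #(sensors G C)
      ≤ #(C.image Sum.inl) + #((orientedEdges G).biUnion fun p => pathSensors C p.1 p.2) :=
        card_union_le _ _
    _ ≤ #C + ∑ p ∈ orientedEdges G, #(pathSensors C p.1 p.2) :=
        add_le_add card_image_le card_biUnion_le
    _ ≤ #C + ∑ _p ∈ orientedEdges G, 2 := by
        gcongr with p
        exact card_pathSensors_le C p.1 p.2
    _ ≤ #C + 2 * #G.edgeFinset := by
        rw [sum_const, smul_eq_mul, mul_comm]
        gcongr
        exact card_orientedEdges_le G

variable {G C}

theorem inl_mem_sensors {u : V} (hu : u ∈ C) : Sum.inl u ∈ sensors G C :=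
  mem_union_left _ (mem_image_of_mem _ hu)

theorem mem_sensors_of_mem_pathSensors {a b : V} (hab : G.Adj a b) (hlt : a < b)
    {x : SubVert V} (hx : x ∈ pathSensors C a b) : x ∈ sensors G C :=
  mem_union_right _ (mem_biUnion.2 ⟨(a, b), by simp [orientedEdges, hab, hlt], hx⟩)

theorem sensors_cover_subdivRel (hC : IsCover G (C : Set V)) {x y : SubVert V}
    (hxy : subdivRel G x y) : x ∈ sensors G C ∨ y ∈ sensors G C := by
  rcases x with u | ⟨a, b, i⟩ <;> rcases y with w | ⟨a', b', j⟩ <;> try exact hxy.elim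
  · obtain ⟨hab, hlt, ⟨rfl, rfl⟩ | ⟨rfl, rfl⟩⟩ := hxy
    · by_cases hu : u ∈ C
      · exact .inl (inl_mem_sensors hu)
      · exact .inr (mem_sensors_of_mem_pathSensors hab hlt (by simp [pathSensors, hu]))
    · by_cases ha : a' ∈ C
      · exact .inr (mem_sensors_of_mem_pathSensors hab hlt (by simp [pathSensors, ha]))
      · have hu : u ∈ C := (hC hab).resolve_left ha
        exact .inl (inl_mem_sensors hu)
  · obtain ⟨rfl, rfl, hab, hlt, hij⟩ := hxy
    exact (inr_mem_pathSensors_or C hij).imp (mem_sensors_of_mem_pathSensors hab hlt)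
      (mem_sensors_of_mem_pathSensors hab hlt)

theorem isCover_sensors (hC : IsCover G (C : Set V)) :
    IsCover (subdiv G) (sensors G C : Set (SubVert V)) := by
  rintro x y (hxy | hyx)
  · exact sensors_cover_subdivRel hC hxy
  · exact (sensors_cover_subdivRel hC hyx).symm

end

/-- If `G` has a vertex cover of size `τ`, then the edges of its 5-subdivision can be
covered by `τ + 2|E|` vertices. -/
theorem subdiv_cover_of_cover {V : Type*} [Fintype V] [LinearOrder V]
    (G : SimpleGraph V) [DecidableRel G.Adj] (C : Finset V) (τ : ℕ)
    (hC : IsCover G (C : Set V)) (hτ : C.card = τ) :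
    ∃ S : Finset (SubVert V), IsCover (subdiv G) (S : Set (SubVert V)) ∧
      S.card ≤ τ + 2 * G.edgeFinset.card :=
  ⟨sensors G C, isCover_sensors hC, hτ ▸ card_sensors_le G C⟩
end

section
/- Any set of hippodromes of horizontal segments lying in a horizontal strip of height √3·ρ, all of which intersect the hippodrome of the segment with leftmost right-endpoint, can be simultaneously pierced by 2 points (the two disk centers covering the 2ρ × √3ρ rectangle anchored at that right endpoint). -/
open Metric Set

/-!
Let `a` be the abscissa of `v₀`. Every hippodrome `H(ℓᵢ, ρ)` meets `H(ℓ₁, ρ)`, so some point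
of `ℓᵢ` lies within `2ρ` of a point of `ℓ₁`, whose abscissa is at most `a`; since the right
endpoint of `ℓᵢ` has abscissa at least `a`, the horizontal segment `ℓᵢ` meets the rectangle
`[a, a + 2ρ] × [0, √3ρ]`. Its two halves `[a, a + ρ] × [0, √3ρ]` and `[a + ρ, a + 2ρ] × [0, √3ρ]`
have half-diagonal `√(ρ²/4 + 3ρ²/4) = ρ`, so their centres pierce every `H(ℓᵢ, ρ)`.
-/

theorem isCompact_segment {E : Type*} [AddCommGroup E] [Module ℝ E] [TopologicalSpace E]
    [IsTopologicalAddGroup E] [ContinuousSMul ℝ E] (x y : E) : IsCompact (segment ℝ x y) := by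
  rw [← convexHull_pair]
  exact (toFinite _).isCompact_convexHull ℝ

theorem exists_dist_le_add_of_infDist_le {α : Type*} [PseudoMetricSpace α] {s t : Set α}
    (hs : IsCompact s) (hs' : s.Nonempty) (ht : IsCompact t) (ht' : t.Nonempty) {z : α}
    {a b : ℝ} (hzs : infDist z s ≤ a) (hzt : infDist z t ≤ b) :
    ∃ x ∈ s, ∃ y ∈ t, dist x y ≤ a + b := by
  obtain ⟨x, hx, hzx⟩ := hs.exists_infDist_eq_dist hs' z
  obtain ⟨y, hy, hzy⟩ := ht.exists_infDist_eq_dist ht' z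
  refine ⟨x, hx, y, hy, ?_⟩
  calc dist x y ≤ dist z x + dist z y := dist_triangle_left x y z
    _ ≤ a + b := add_le_add (hzx ▸ hzs) (hzy ▸ hzt)

namespace EuclideanSpace

variable {ι : Type*} {x y w : EuclideanSpace ℝ ι}

theorem apply_mem_segment (hw : w ∈ segment ℝ x y) (i : ι) : w i ∈ segment ℝ (x i) (y i) := by
  obtain ⟨s, t, hs, ht, hst, rfl⟩ := hw
  exact ⟨s, t, hs, ht, hst, by simp⟩

theorem exists_mem_segment_apply_eq {i : ι} {c : ℝ} (hc : c ∈ segment ℝ (x i) (y i)) :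
    ∃ w ∈ segment ℝ x y, w i = c := by
  obtain ⟨s, t, hs, ht, hst, rfl⟩ := hc
  exact ⟨s • x + t • y, ⟨s, t, hs, ht, hst, rfl⟩, by simp⟩

/-- The abscissa `max A (w i)` lies between `w i` and `y i`, hence is attained on `[w, y]`. -/
theorem exists_mem_segment_apply_mem_Icc (hw : w ∈ segment ℝ x y) {i : ι} {A B : ℝ}
    (hAB : A ≤ B) (hwB : w i ≤ B) (hAy : A ≤ y i) :
    ∃ c ∈ segment ℝ x y, c i ∈ Icc A B := by
  have hmax : max A (w i) ∈ segment ℝ (w i) (y i) := by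
    rw [segment_eq_uIcc]
    rcases le_total (w i) (y i) with h | h
    · exact Icc_subset_uIcc ⟨le_max_right _ _, max_le hAy h⟩
    · rw [max_eq_right (hAy.trans h)]
      exact left_mem_uIcc
  have hsub := (convex_segment (x i) (y i)).segment_subset (apply_mem_segment hw i)
    (right_mem_segment ℝ (x i) (y i))
  obtain ⟨c, hc, hci⟩ := exists_mem_segment_apply_eq (hsub hmax)
  exact ⟨c, hc, hci ▸ ⟨le_max_left _ _, max_le hAB hwB⟩⟩

theorem dist_le_sqrt_of_abs_sub_le {x y : EuclideanSpace ℝ (Fin 2)} {a b : ℝ}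
    (h₀ : |x 0 - y 0| ≤ a) (h₁ : |x 1 - y 1| ≤ b) : dist x y ≤ √(a ^ 2 + b ^ 2) := by
  rw [EuclideanSpace.dist_eq, Fin.sum_univ_two, Real.dist_eq, Real.dist_eq]
  gcongr

end EuclideanSpace

open EuclideanSpace

noncomputable def coverCenter (a ρ : ℝ) : EuclideanSpace ℝ (Fin 2) :=
  !₂[a + ρ / 2, √3 * ρ / 2]

theorem dist_coverCenter_le {a ρ : ℝ} {c : EuclideanSpace ℝ (Fin 2)}
    (h₀ : c 0 ∈ Icc a (a + ρ)) (h₁ : c 1 ∈ Icc 0 (√3 * ρ)) : dist (coverCenter a ρ) c ≤ ρ := by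
  have hρ : 0 ≤ ρ := by linarith [h₀.1.trans h₀.2]
  have hρ' : √((ρ / 2) ^ 2 + (√3 * ρ / 2) ^ 2) = ρ := by
    rw [mul_div_assoc, mul_pow, Real.sq_sqrt zero_le_three]
    rw [show (ρ / 2) ^ 2 + 3 * (ρ / 2) ^ 2 = ρ ^ 2 by ring, Real.sqrt_sq hρ]
  refine (dist_le_sqrt_of_abs_sub_le (abs_le.2 ⟨?_, ?_⟩) (abs_le.2 ⟨?_, ?_⟩)).trans_eq hρ' <;>
    simp [coverCenter] <;> linarith [h₀.1, h₀.2, h₁.1, h₁.2]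

theorem dist_coverCenter_le_or {a ρ : ℝ} {c : EuclideanSpace ℝ (Fin 2)}
    (h₀ : c 0 ∈ Icc a (a + 2 * ρ)) (h₁ : c 1 ∈ Icc 0 (√3 * ρ)) :
    dist (coverCenter a ρ) c ≤ ρ ∨ dist (coverCenter (a + ρ) ρ) c ≤ ρ := by
  rcases le_total (c 0) (a + ρ) with h | h
  · exact .inl (dist_coverCenter_le ⟨h₀.1, h⟩ h₁)
  · exact .inr (dist_coverCenter_le ⟨h, by linarith [h₀.2]⟩ h₁)

theorem two_points_pierce_strip_general (ρ : ℝ) (hρ : 0 < ρ) (r : ℕ)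
    (u₀ v₀ : EuclideanSpace ℝ (Fin 2)) (u v : Fin r → EuclideanSpace ℝ (Fin 2))
    -- all segments are horizontal:
    (hhor : ∀ i, (u i) 1 = (v i) 1)
    -- all segments lie inside the strip ℝ × [0, √3·ρ]:
    (hstrip₀ : v₀ 1 ∈ Icc (0 : ℝ) (Real.sqrt 3 * ρ))
    (hstrip : ∀ i, (v i) 1 ∈ Icc (0 : ℝ) (Real.sqrt 3 * ρ))
    -- `v₀` and `v i` are the right endpoints:
    (hright₀ : u₀ 0 ≤ v₀ 0)
    -- `ℓ₁` has the leftmost right endpoint: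
    (hmin : ∀ i, v₀ 0 ≤ (v i) 0)
    -- every hippodrome intersects the hippodrome of `ℓ₁`:
    (hmeet : ∀ i, ∃ z : EuclideanSpace ℝ (Fin 2),
        infDist z (segment ℝ (u i) (v i)) ≤ ρ ∧ infDist z (segment ℝ u₀ v₀) ≤ ρ) :
    ∃ p q : EuclideanSpace ℝ (Fin 2),
      (infDist p (segment ℝ u₀ v₀) ≤ ρ ∨ infDist q (segment ℝ u₀ v₀) ≤ ρ) ∧
      ∀ i, infDist p (segment ℝ (u i) (v i)) ≤ ρ ∨
           infDist q (segment ℝ (u i) (v i)) ≤ ρ := by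
  refine ⟨coverCenter (v₀ 0) ρ, coverCenter (v₀ 0 + ρ) ρ, .inl ?_, fun i => ?_⟩
  · exact (infDist_le_dist_of_mem (right_mem_segment ℝ u₀ v₀)).trans
      (dist_coverCenter_le ⟨le_rfl, by linarith⟩ hstrip₀)
  obtain ⟨z, hzi, hz₀⟩ := hmeet i
  obtain ⟨a, ha, b, hb, hab⟩ := exists_dist_le_add_of_infDist_le (isCompact_segment _ _)
    ⟨_, left_mem_segment ℝ _ _⟩ (isCompact_segment _ _) ⟨_, left_mem_segment ℝ _ _⟩ hzi hz₀
  have hb₀ : b 0 ≤ v₀ 0 := (segment_eq_Icc hright₀ ▸ apply_mem_segment hb 0).2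
  have ha₀ : a 0 ≤ v₀ 0 + 2 * ρ := by
    have := (PiLp.dist_apply_le a b 0).trans hab
    rw [Real.dist_eq] at this
    linarith [le_abs_self (a 0 - b 0)]
  obtain ⟨c, hc, hc₀⟩ := exists_mem_segment_apply_mem_Icc ha (by linarith) ha₀ (hmin i)
  have hc₁ : c 1 = v i 1 := by simpa [hhor i] using apply_mem_segment hc 1
  exact (dist_coverCenter_le_or hc₀ (hc₁ ▸ hstrip i)).imp
    (infDist_le_dist_of_mem hc).trans (infDist_le_dist_of_mem hc).trans

/-- Horizontal segments in a strip of height `√3·ρ`, whose `ρ`-hippodromes all meet the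
hippodrome of the segment `ℓ₁ = [u₀, v₀]` with leftmost right endpoint, can all be
pierced (covered) using just two sensor positions `p, q`. -/
theorem two_points_pierce_strip (ρ : ℝ) (hρ : 0 < ρ) (r : ℕ)
    (u₀ v₀ : EuclideanSpace ℝ (Fin 2)) (u v : Fin r → EuclideanSpace ℝ (Fin 2))
    -- all segments are horizontal:
    (hhor₀ : u₀ 1 = v₀ 1) (hhor : ∀ i, (u i) 1 = (v i) 1)
    -- all segments lie inside the strip ℝ × [0, √3·ρ]:
    (hstrip₀ : v₀ 1 ∈ Icc (0 : ℝ) (Real.sqrt 3 * ρ))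
    (hstrip : ∀ i, (v i) 1 ∈ Icc (0 : ℝ) (Real.sqrt 3 * ρ))
    -- `v₀` and `v i` are the right endpoints:
    (hright₀ : u₀ 0 ≤ v₀ 0) (hright : ∀ i, (u i) 0 ≤ (v i) 0)
    -- `ℓ₁` has the leftmost right endpoint:
    (hmin : ∀ i, v₀ 0 ≤ (v i) 0)
    -- every hippodrome intersects the hippodrome of `ℓ₁`:
    (hmeet : ∀ i, ∃ z : EuclideanSpace ℝ (Fin 2),
        infDist z (segment ℝ (u i) (v i)) ≤ ρ ∧ infDist z (segment ℝ u₀ v₀) ≤ ρ) :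
    ∃ p q : EuclideanSpace ℝ (Fin 2),
      (infDist p (segment ℝ u₀ v₀) ≤ ρ ∨ infDist q (segment ℝ u₀ v₀) ≤ ρ) ∧
      ∀ i, infDist p (segment ℝ (u i) (v i)) ≤ ρ ∨
           infDist q (segment ℝ (u i) (v i)) ≤ ρ :=
  two_points_pierce_strip_general ρ hρ r u₀ v₀ u v hhor hstrip₀ hstrip hright₀ hmin hmeet
end
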